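/- Let h(z) be a nonzero complex polynomial of degree n with all zeros strictly inside the open unit disk |z| < 1, let d > n, and let λ be a complex number with |λ| > 1. Then every zero z of the polynomial P(z) = z^(d-n) h(z) + λ h*(z) satisfies |z| > 1. -/

import Mathlib

/-!
On the closed unit disk each factor of `h = c ∏ (X - a)` is dominated by the corresponding factor
`conj c * ∏ (1 - conj a * X)` of `h*`, because of the Blaschke identity
`|1 - ā z|² - |z - a|² = (1 - |a|²)(1 - |z|²)`; moreover `h*` does not vanish there. Hence for
`|z| ≤ 1` we get `|z^(d-n) h(z)| ≤ |h(z)| ≤ |h*(z)| < |λ h*(z)|`, so `z` is not a zero of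
`z^(d-n) h + λ h*`.
-/

open Polynomial

noncomputable def conjReciprocal (h : Polynomial ℂ) : Polynomial ℂ :=
  (h.map (starRingEnd ℂ)).reverse

open ComplexConjugate Complex

lemma conjReciprocal_mul (p q : ℂ[X]) :
    conjReciprocal (p * q) = conjReciprocal p * conjReciprocal q := by
  rw [conjReciprocal, Polynomial.map_mul, reverse_mul_of_domain]
  rfl

lemma conjReciprocal_C (c : ℂ) : conjReciprocal (C c) = C (conj c) := by
  simp [conjReciprocal]

lemma conjReciprocal_X_sub_C (a : ℂ) : conjReciprocal (X - C a) = 1 - C (conj a) * X := by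
  have reverse_X : (X : ℂ[X]).reverse = 1 := by
    rw [← one_mul (X : ℂ[X]), reverse_mul_X, ← C_1, reverse_C]
  rw [conjReciprocal, Polynomial.map_sub, map_X, map_C, sub_eq_add_neg, ← C_neg, reverse_add_C,
    reverse_X]
  simp [sub_eq_add_neg]

lemma normSq_one_sub_conj_mul_sub_normSq_sub (a z : ℂ) :
    normSq (1 - conj a * z) - normSq (z - a) = (1 - normSq a) * (1 - normSq z) := by
  simp only [normSq_apply, sub_re, sub_im, mul_re, mul_im, conj_re, conj_im, one_re, one_im]
  ring

lemma norm_sub_le_norm_one_sub_conj_mul {a z : ℂ} (ha : ‖a‖ ≤ 1) (hz : ‖z‖ ≤ 1) :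
    ‖z - a‖ ≤ ‖1 - conj a * z‖ := by
  have ha' : normSq a ≤ 1 := by rw [normSq_eq_norm_sq]; nlinarith [norm_nonneg a]
  have hz' : normSq z ≤ 1 := by rw [normSq_eq_norm_sq]; nlinarith [norm_nonneg z]
  have key := normSq_one_sub_conj_mul_sub_normSq_sub a z
  rw [← sq_le_sq₀ (norm_nonneg _) (norm_nonneg _), ← normSq_eq_norm_sq, ← normSq_eq_norm_sq]
  nlinarith

lemma one_sub_conj_mul_ne_zero {a z : ℂ} (ha : ‖a‖ < 1) (hz : ‖z‖ ≤ 1) :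
    1 - conj a * z ≠ 0 := by
  have : ‖conj a * z‖ < 1 := by
    rw [norm_mul, norm_conj]
    nlinarith [norm_nonneg a, norm_nonneg z]
  intro h0
  rw [← sub_eq_zero.mp h0, norm_one] at this
  exact lt_irrefl _ this

lemma norm_eval_le_norm_eval_conjReciprocal {h : ℂ[X]} (hh : h ≠ 0)
    (hroots : ∀ a : ℂ, h.eval a = 0 → ‖a‖ < 1) {z : ℂ} (hz : ‖z‖ ≤ 1) :
    ‖h.eval z‖ ≤ ‖(conjReciprocal h).eval z‖ ∧ (conjReciprocal h).eval z ≠ 0 := by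
  -- the property is multiplicative, so it suffices to check it on the factors of `h`
  let P : ℂ[X] → Prop := fun p =>
    ‖p.eval z‖ ≤ ‖(conjReciprocal p).eval z‖ ∧ (conjReciprocal p).eval z ≠ 0
  have P_mul : ∀ p q, P p → P q → P (p * q) := fun p q ⟨hp, hp0⟩ ⟨hq, hq0⟩ => by
    simp only [P, conjReciprocal_mul, eval_mul, norm_mul]
    exact ⟨mul_le_mul hp hq (norm_nonneg _) (norm_nonneg _), mul_ne_zero hp0 hq0⟩
  have P_C : ∀ c : ℂ, c ≠ 0 → P (C c) := fun c hc => by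
    simp [P, conjReciprocal_C, hc]
  have P_X_sub_C : ∀ a : ℂ, ‖a‖ < 1 → P (X - C a) := fun a ha => by
    simp only [P, conjReciprocal_X_sub_C, eval_sub, eval_X, eval_C, eval_one, eval_mul]
    exact ⟨norm_sub_le_norm_one_sub_conj_mul ha.le hz, one_sub_conj_mul_ne_zero ha hz⟩
  rw [(IsAlgClosed.splits h).eq_prod_roots]
  refine P_mul _ _ (P_C _ (leadingCoeff_ne_zero.mpr hh)) (Multiset.prod_induction P _ P_mul ?_ ?_)
  · simpa using P_C 1 one_ne_zero
  · simp only [Multiset.mem_map]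
    rintro _ ⟨a, ha, rfl⟩
    exact P_X_sub_C a (hroots a (isRoot_of_mem_roots ha))

theorem stmt_1_general (h : Polynomial ℂ) (n d : ℕ) (lam : ℂ)
    (hh : h ≠ 0)
    (hz : ∀ z : ℂ, h.eval z = 0 → ‖z‖ < 1)
    (hlam : 1 < ‖lam‖) :
    ∀ z : ℂ, (X ^ (d - n) * h + C lam * conjReciprocal h).eval z = 0 →
      1 < ‖z‖ := by
  intro z hPz
  by_contra! hz1
  obtain ⟨hle, hne⟩ := norm_eval_le_norm_eval_conjReciprocal hh hz hz1
  have hbalance : z ^ (d - n) * h.eval z = -(lam * (conjReciprocal h).eval z) :=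
    eq_neg_of_add_eq_zero_left (by simpa using hPz)
  have : ‖lam * (conjReciprocal h).eval z‖ < ‖lam * (conjReciprocal h).eval z‖ :=
    calc ‖lam * (conjReciprocal h).eval z‖ = ‖z‖ ^ (d - n) * ‖h.eval z‖ := by
          rw [← norm_neg, ← hbalance, norm_mul, norm_pow]
      _ ≤ ‖(conjReciprocal h).eval z‖ :=
          (mul_le_of_le_one_left (norm_nonneg _) (pow_le_one₀ (norm_nonneg z) hz1)).trans hle
      _ < ‖lam * (conjReciprocal h).eval z‖ := by
          rw [norm_mul]; exact lt_mul_of_one_lt_left (norm_pos_iff.mpr hne) hlam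
  exact lt_irrefl _ this

theorem stmt_1 (h : Polynomial ℂ) (n d : ℕ) (lam : ℂ)
    (hh : h ≠ 0) (hn : h.natDegree = n) (hd : n < d)
    (hz : ∀ z : ℂ, h.eval z = 0 → ‖z‖ < 1)
    (hlam : 1 < ‖lam‖) :
    ∀ z : ℂ, (X ^ (d - n) * h + C lam * conjReciprocal h).eval z = 0 →
      1 < ‖z‖ :=
  stmt_1_general h n d lam hh hz hlam
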